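/- Let a > 0 and let y₀ ∈ L²(ℝ, ℂ). Define K_a(x,s,t) = √(a/π) · (e^{2at} − e^{-2at})^{-1/2} · exp( −a·(e^{at}x − e^{-at}s)² / (e^{2at} − e^{-2at}) + (a/2)·(x² − s²) ) and y(t,x) = ∫_ℝ K_a(x,s,t)·y₀(s) ds for t > 0, x ∈ ℝ. Then the integral defining y(t,x) converges for every t > 0 and x ∈ ℝ, and y satisfies the heat equation for the real harmonic oscillator: ∂y/∂t (t,x) = ∂²y/∂x² (t,x) − a²·x²·y(t,x) for all t > 0 and x ∈ ℝ. -/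

import Mathlib

/-
In hyperbolic form,
`K_a(x,s,t) = √(a/π) (2 sinh 2at)^(-1/2) exp(-a((x² + s²) cosh 2at - 2xs) / (2 sinh 2at))`,
and `∂ₓK`, `∂ₓ²K`, `∂ₜK` are `K` times polynomials of degree at most two in `s`; the identity
`∂ₜK = ∂ₓ²K - a²x²K` then reduces to `cosh² - sinh² = 1`. Since `K ≤ C(x,t) e^{-as²/2}` with `C`
continuous for `t > 0`, all three are dominated, locally uniformly in `(x,t)`, by a multiple of the
Gaussian `e^{-as²/4} ∈ L²`. Cauchy–Schwarz against `y₀ ∈ L²` gives integrability and justifies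
differentiating under the integral sign.
-/

open Real MeasureTheory

/-- The Mehler-type heat kernel of the real harmonic oscillator obtained via
the Bargmann transform. -/
noncomputable def mehlerKernel (a x s t : ℝ) : ℝ :=
  Real.sqrt (a / Real.pi) * (Real.sqrt (Real.exp (2 * a * t) - Real.exp (-(2 * a * t))))⁻¹ *
    Real.exp (-(a * (Real.exp (a * t) * x - Real.exp (-(a * t)) * s) ^ 2)
        / (Real.exp (2 * a * t) - Real.exp (-(2 * a * t)))
      + (a / 2) * (x ^ 2 - s ^ 2))

open Filter Metric Topology

attribute [fun_prop] continuous_sinh continuous_cosh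

lemma memLp_two_exp_neg_mul_sq {b : ℝ} (hb : 0 < b) :
    MemLp (fun s : ℝ => exp (-b * s ^ 2)) 2 volume := by
  refine (memLp_two_iff_integrable_sq (by fun_prop)).2 ?_
  refine (integrable_exp_neg_mul_sq (by positivity : 0 < 2 * b)).congr (ae_of_all _ fun s => ?_)
  simp only [← exp_nat_mul]
  ring_nf

lemma integrable_ofReal_mul_of_abs_le {g : ℝ → ℝ} {y₀ : ℝ → ℂ} {b C : ℝ} (hb : 0 < b)
    (hg : AEStronglyMeasurable g volume) (hgC : ∀ s, |g s| ≤ C * exp (-b * s ^ 2))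
    (hy₀ : MemLp y₀ 2 volume) :
    Integrable (fun s => (g s : ℂ) * y₀ s) volume := by
  have hg2 : MemLp g 2 volume :=
    ((memLp_two_exp_neg_mul_sq hb).const_mul C).of_le hg (ae_of_all _ fun s => by
      simpa only [norm_eq_abs] using (hgC s).trans (le_abs_self _))
  exact hg2.ofReal.integrable_mul hy₀

lemma one_add_sq_mul_exp_le {b : ℝ} (hb : 0 < b) (s : ℝ) :
    (1 + s ^ 2) * exp (-(2 * b) * s ^ 2) ≤ (1 + 1 / b) * exp (-b * s ^ 2) := by
  have h1 : 1 + s ^ 2 ≤ (1 + 1 / b) * (1 + b * s ^ 2) := by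
    field_simp
    nlinarith [sq_nonneg (s * b)]
  have h2 : (1 + b * s ^ 2) * exp (-(2 * b) * s ^ 2) ≤ exp (-b * s ^ 2) := by
    calc (1 + b * s ^ 2) * exp (-(2 * b) * s ^ 2)
        ≤ exp (b * s ^ 2) * exp (-(2 * b) * s ^ 2) := by
          gcongr; linarith [add_one_le_exp (b * s ^ 2)]
      _ = exp (-b * s ^ 2) := by rw [← exp_add]; ring_nf
  calc (1 + s ^ 2) * exp (-(2 * b) * s ^ 2)
      ≤ (1 + 1 / b) * (1 + b * s ^ 2) * exp (-(2 * b) * s ^ 2) := by gcongr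
    _ ≤ (1 + 1 / b) * exp (-b * s ^ 2) := by rw [mul_assoc]; gcongr

lemma abs_quadratic_le (c₀ c₁ c₂ s : ℝ) :
    |c₀ + c₁ * s + c₂ * s ^ 2| ≤ (|c₀| + |c₁| + |c₂|) * (1 + s ^ 2) := by
  have hs : |s| ≤ 1 + s ^ 2 := by nlinarith [sq_abs s, sq_nonneg (|s| - 1)]
  calc |c₀ + c₁ * s + c₂ * s ^ 2| ≤ |c₀| + |c₁| * |s| + |c₂| * s ^ 2 := by
        refine (abs_add_le _ _).trans (add_le_add ((abs_add_le _ _).trans ?_) ?_) <;>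
          simp [abs_mul]
    _ ≤ (|c₀| + |c₁| + |c₂|) * (1 + s ^ 2) := by
        nlinarith [abs_nonneg c₀, abs_nonneg c₁, abs_nonneg c₂, sq_nonneg s,
          mul_le_mul_of_nonneg_left hs (abs_nonneg c₁)]

lemma hasDerivAt_integral_ofReal_mul {y₀ : ℝ → ℂ} (hy₀ : MemLp y₀ 2 volume)
    {F F' : ℝ → ℝ → ℝ} {x₀ b C : ℝ} {U : Set ℝ} (hU : U ∈ 𝓝 x₀) (hb : 0 < b)
    (hF : ∀ x, Continuous (F x)) (hF' : Continuous (F' x₀))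
    (hF_int : Integrable (fun s => (F x₀ s : ℂ) * y₀ s) volume)
    (h_bound : ∀ x ∈ U, ∀ s, |F' x s| ≤ C * exp (-b * s ^ 2))
    (h_diff : ∀ x ∈ U, ∀ s, HasDerivAt (F · s) (F' x s) x) :
    Integrable (fun s => (F' x₀ s : ℂ) * y₀ s) volume ∧
      HasDerivAt (fun x => ∫ s, (F x s : ℂ) * y₀ s) (∫ s, (F' x₀ s : ℂ) * y₀ s) x₀ := by
  refine hasDerivAt_integral_of_dominated_loc_of_deriv_le
    (bound := fun s => ‖((C * exp (-b * s ^ 2) : ℝ) : ℂ) * y₀ s‖) hU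
    (Eventually.of_forall fun x =>
      (Complex.continuous_ofReal.comp (hF x)).aestronglyMeasurable.mul hy₀.1)
    hF_int ((Complex.continuous_ofReal.comp hF').aestronglyMeasurable.mul hy₀.1)
    (ae_of_all _ fun s x hx => ?_)
    (integrable_ofReal_mul_of_abs_le (C := |C|) hb (by fun_prop)
      (fun s => by rw [abs_mul, abs_of_pos (exp_pos _)]) hy₀).norm
    (ae_of_all _ fun s x hx => ((h_diff x hx s).ofReal_comp).mul_const (y₀ s))
  rw [norm_mul, norm_mul, Complex.norm_real, Complex.norm_real]
  gcongr
  exact (h_bound x hx s).trans (le_abs_self _)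

lemma mehlerKernel_nonneg (a x s t : ℝ) : 0 ≤ mehlerKernel a x s t := by
  unfold mehlerKernel; positivity

@[fun_prop]
lemma continuous_mehlerKernel (a x t : ℝ) : Continuous fun s => mehlerKernel a x s t := by
  unfold mehlerKernel; fun_prop

lemma mehlerKernel_le {a : ℝ} (ha : 0 ≤ a) (x s t : ℝ) :
    mehlerKernel a x s t ≤
      √(a / π) * (√(exp (2 * a * t) - exp (-(2 * a * t))))⁻¹ * exp (a / 2 * (x ^ 2 - s ^ 2)) := by
  rw [mehlerKernel]
  rcases le_or_gt (exp (2 * a * t) - exp (-(2 * a * t))) 0 with hD | hD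
  · simp [sqrt_eq_zero'.2 hD]
  gcongr
  have : 0 ≤ a * (exp (a * t) * x - exp (-(a * t)) * s) ^ 2 /
      (exp (2 * a * t) - exp (-(2 * a * t))) := by
    positivity
  rw [neg_div]
  linarith

lemma exists_bound_quadratic_mul_mehlerKernel {a : ℝ} (ha : 0 < a) {S : Set (ℝ × ℝ)}
    (hS : IsCompact S) (hS_pos : ∀ p ∈ S, 0 < p.2) {P : ℝ × ℝ → ℝ → ℝ} {c₀ c₁ c₂ : ℝ × ℝ → ℝ}
    (hc₀ : ContinuousOn c₀ S) (hc₁ : ContinuousOn c₁ S) (hc₂ : ContinuousOn c₂ S)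
    (hP : ∀ p ∈ S, ∀ s, P p s = c₀ p + c₁ p * s + c₂ p * s ^ 2) :
    ∃ C, ∀ p ∈ S, ∀ s, |P p s * mehlerKernel a p.1 s p.2| ≤ C * exp (-(a / 4) * s ^ 2) := by
  set B := fun p : ℝ × ℝ => (|c₀ p| + |c₁ p| + |c₂ p|) *
    (√(a / π) * (√(exp (2 * a * p.2) - exp (-(2 * a * p.2))))⁻¹ * exp (a / 2 * p.1 ^ 2))
  have hB : ContinuousOn B S := by
    have hD : ∀ p ∈ S, √(exp (2 * a * p.2) - exp (-(2 * a * p.2))) ≠ 0 := by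
      intro p hp
      have : -(2 * a * p.2) < 2 * a * p.2 := by nlinarith [hS_pos p hp]
      exact (sqrt_pos.2 (sub_pos.2 (exp_lt_exp.2 this))).ne'
    fun_prop (disch := assumption)
  obtain ⟨M, hM⟩ := hS.exists_bound_of_continuousOn hB
  refine ⟨M * (1 + 1 / (a / 4)), fun p hp s => ?_⟩
  have hBM : B p ≤ M := (le_abs_self _).trans (hM p hp)
  have hM0 : 0 ≤ M := (norm_nonneg _).trans (hM p hp)
  have hexp : exp (a / 2 * (p.1 ^ 2 - s ^ 2)) =
      exp (a / 2 * p.1 ^ 2) * exp (-(2 * (a / 4)) * s ^ 2) := by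
    rw [← exp_add]; ring_nf
  calc |P p s * mehlerKernel a p.1 s p.2|
      = |P p s| * mehlerKernel a p.1 s p.2 := by
        rw [abs_mul, abs_of_nonneg (mehlerKernel_nonneg _ _ _ _)]
    _ ≤ (|c₀ p| + |c₁ p| + |c₂ p|) * (1 + s ^ 2) * (√(a / π) *
          (√(exp (2 * a * p.2) - exp (-(2 * a * p.2))))⁻¹ * exp (a / 2 * (p.1 ^ 2 - s ^ 2))) := by
        rw [hP p hp]
        exact mul_le_mul (abs_quadratic_le _ _ _ _) (mehlerKernel_le ha.le _ _ _)
          (mehlerKernel_nonneg _ _ _ _) (by positivity)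
    _ = B p * ((1 + s ^ 2) * exp (-(2 * (a / 4)) * s ^ 2)) := by
        rw [hexp]; ring
    _ ≤ M * ((1 + 1 / (a / 4)) * exp (-(a / 4) * s ^ 2)) :=
        mul_le_mul hBM (one_add_sq_mul_exp_le (by positivity) s) (by positivity) hM0
    _ = M * (1 + 1 / (a / 4)) * exp (-(a / 4) * s ^ 2) := by ring

/-- Valid for every `t`: where `sinh (2 * a * t) = 0`, both prefactors are `(√0)⁻¹ = 0`. -/
lemma mehlerKernel_eq_sinh_cosh (a x s t : ℝ) :
    mehlerKernel a x s t = √(a / π) * (√(2 * sinh (2 * a * t)))⁻¹ *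
      exp (-a * (cosh (2 * a * t) * (x ^ 2 + s ^ 2) - 2 * x * s) / (2 * sinh (2 * a * t))) := by
  have hD : exp (2 * a * t) - exp (-(2 * a * t)) = 2 * sinh (2 * a * t) := by
    rw [sinh_eq]; ring
  rw [mehlerKernel, hD]
  rcases eq_or_ne (sinh (2 * a * t)) 0 with h | h
  · simp [h]
  congr 2
  have hE : exp (2 * a * t) = exp (a * t) ^ 2 := by rw [← exp_nat_mul]; ring_nf
  have hF : exp (-(2 * a * t)) = exp (-(a * t)) ^ 2 := by rw [← exp_nat_mul]; ring_nf
  have hEF : exp (a * t) * exp (-(a * t)) = 1 := by rw [← exp_add]; simp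
  have hc : 2 * cosh (2 * a * t) = exp (a * t) ^ 2 + exp (-(a * t)) ^ 2 := by
    rw [cosh_eq, hE, hF]; ring
  have hs : 2 * sinh (2 * a * t) = exp (a * t) ^ 2 - exp (-(a * t)) ^ 2 := by
    rw [← hD, hE, hF]
  clear hD hE hF
  generalize exp (a * t) = E, exp (-(a * t)) = F, sinh (2 * a * t) = S, cosh (2 * a * t) = C at *
  field_simp
  linear_combination (2 * a * x * s) * hEF + (a * (x ^ 2 - s ^ 2) / 2) * hs +
    (a * (x ^ 2 + s ^ 2) / 2) * hc

noncomputable def mehlerFactorX (a x s t : ℝ) : ℝ :=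
  a * (s - x * cosh (2 * a * t)) / sinh (2 * a * t)

noncomputable def mehlerFactorXX (a x s t : ℝ) : ℝ :=
  -a * cosh (2 * a * t) / sinh (2 * a * t) + mehlerFactorX a x s t ^ 2

noncomputable def mehlerFactorT (a x s t : ℝ) : ℝ :=
  -a * cosh (2 * a * t) / sinh (2 * a * t) +
    a ^ 2 * (x ^ 2 + s ^ 2 - 2 * x * s * cosh (2 * a * t)) / sinh (2 * a * t) ^ 2

lemma mehlerFactorT_eq (a x s t : ℝ) (h : sinh (2 * a * t) ≠ 0) :
    mehlerFactorT a x s t = mehlerFactorXX a x s t - a ^ 2 * x ^ 2 := by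
  rw [mehlerFactorT, mehlerFactorXX, mehlerFactorX]
  have hc := cosh_sq (2 * a * t)
  generalize 2 * a * t = θ at *
  field_simp
  linear_combination (-a ^ 2 * x ^ 2) * hc

lemma hasDerivAt_mehlerFactorX_x (a x s t : ℝ) :
    HasDerivAt (fun x => mehlerFactorX a x s t) (-a * cosh (2 * a * t) / sinh (2 * a * t)) x := by
  have := (((hasDerivAt_id x).mul_const (cosh (2 * a * t))).const_sub s).const_mul a
    |>.div_const (sinh (2 * a * t))
  exact this.congr_deriv (by ring)

lemma hasDerivAt_mehlerKernel_x (a x s t : ℝ) :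
    HasDerivAt (fun x => mehlerKernel a x s t)
      (mehlerFactorX a x s t * mehlerKernel a x s t) x := by
  simp only [mehlerKernel_eq_sinh_cosh]
  have hφ : HasDerivAt
      (fun x => -a * (cosh (2 * a * t) * (x ^ 2 + s ^ 2) - 2 * x * s) / (2 * sinh (2 * a * t)))
      (mehlerFactorX a x s t) x := by
    refine ((((hasDerivAt_pow 2 x).add_const (s ^ 2)).const_mul _).sub
      (((hasDerivAt_id x).const_mul 2).mul_const s)).const_mul (-a)
      |>.div_const _ |>.congr_deriv ?_
    simp only [mehlerFactorX]
    ring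
  exact (hφ.exp.const_mul _).congr_deriv (by ring)

lemma hasDerivAt_mehlerFactorX_mul_mehlerKernel_x (a x s t : ℝ) :
    HasDerivAt (fun x => mehlerFactorX a x s t * mehlerKernel a x s t)
      (mehlerFactorXX a x s t * mehlerKernel a x s t) x := by
  refine ((hasDerivAt_mehlerFactorX_x a x s t).mul
    (hasDerivAt_mehlerKernel_x a x s t)).congr_deriv ?_
  rw [mehlerFactorXX]
  ring

lemma hasDerivAt_mehlerKernel_t (a x s t : ℝ) (h : 0 < sinh (2 * a * t)) :
    HasDerivAt (fun t => mehlerKernel a x s t)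
      (mehlerFactorT a x s t * mehlerKernel a x s t) t := by
  simp only [mehlerKernel_eq_sinh_cosh]
  have hθ : HasDerivAt (fun t => 2 * a * t) (2 * a) t := by
    simpa using (hasDerivAt_id t).const_mul (2 * a)
  have hS := hθ.sinh
  have hC := hθ.cosh
  have hsqrt : HasDerivAt (fun t => (√(2 * sinh (2 * a * t)))⁻¹)
      ((√(2 * sinh (2 * a * t)))⁻¹ * (-a * cosh (2 * a * t) / sinh (2 * a * t))) t := by
    have hpos : 0 < 2 * sinh (2 * a * t) := by positivity
    have := ((hS.const_mul 2).sqrt hpos.ne').inv (Real.sqrt_pos.mpr hpos).ne'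
    refine this.congr_deriv ?_
    have := Real.sq_sqrt hpos.le
    field_simp
    rw [this]
    ring
  have hφ : HasDerivAt
      (fun t => -a * (cosh (2 * a * t) * (x ^ 2 + s ^ 2) - 2 * x * s) / (2 * sinh (2 * a * t)))
      (a ^ 2 * (x ^ 2 + s ^ 2 - 2 * x * s * cosh (2 * a * t)) / sinh (2 * a * t) ^ 2) t := by
    refine ((((hC.mul_const _).sub_const _).const_mul (-a)).div (hS.const_mul 2)
      (by positivity)).congr_deriv ?_
    rw [div_eq_div_iff (by positivity) (by positivity)]
    linear_combination (4 * a ^ 2 * sinh (2 * a * t) ^ 2 * (x ^ 2 + s ^ 2)) * cosh_sq (2 * a * t)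
  refine ((hsqrt.const_mul √(a / π)).mul hφ.exp).congr_deriv ?_
  simp only [mehlerFactorT]
  ring

section Integrals

variable {a t : ℝ} {y₀ : ℝ → ℂ}

lemma integrable_mehlerKernel_mul (ha : 0 < a) (ht : 0 < t) (hy₀ : MemLp y₀ 2 volume) (x : ℝ) :
    Integrable (fun s => (mehlerKernel a x s t : ℂ) * y₀ s) volume := by
  obtain ⟨C, hC⟩ := exists_bound_quadratic_mul_mehlerKernel ha (S := {(x, t)})
    isCompact_singleton (by simpa using ht) (P := fun _ _ => 1) (c₀ := fun _ => 1) (c₁ := 0)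
    (c₂ := 0)
    continuousOn_const continuousOn_const continuousOn_const (fun _ _ _ => by simp)
  exact integrable_ofReal_mul_of_abs_le (b := a / 4) (by positivity)
    (continuous_mehlerKernel a x t).aestronglyMeasurable
    (fun s => by simpa using hC (x, t) rfl s) hy₀

lemma hasDerivAt_integral_mehlerKernel_x (ha : 0 < a) (ht : 0 < t) (hy₀ : MemLp y₀ 2 volume)
    (x : ℝ) :
    Integrable (fun s => ((mehlerFactorX a x s t * mehlerKernel a x s t : ℝ) : ℂ) * y₀ s)
        volume ∧
      HasDerivAt (fun x => ∫ s, (mehlerKernel a x s t : ℂ) * y₀ s)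
        (∫ s, ((mehlerFactorX a x s t * mehlerKernel a x s t : ℝ) : ℂ) * y₀ s) x := by
  have hS_pos : ∀ p ∈ closedBall x 1 ×ˢ {t}, 0 < p.2 := by rintro p ⟨-, rfl⟩; exact ht
  have hsinh : ∀ p ∈ closedBall x 1 ×ˢ {t}, sinh (2 * a * p.2) ≠ 0 := fun p hp =>
    (sinh_pos_iff.2 (mul_pos (by positivity) (hS_pos p hp))).ne'
  obtain ⟨C, hC⟩ := exists_bound_quadratic_mul_mehlerKernel ha (S := closedBall x 1 ×ˢ {t})
    ((isCompact_closedBall x 1).prod isCompact_singleton) hS_pos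
    (P := fun p s => mehlerFactorX a p.1 s p.2)
    (c₀ := fun p => -a * p.1 * cosh (2 * a * p.2) / sinh (2 * a * p.2))
    (c₁ := fun p => a / sinh (2 * a * p.2)) (c₂ := 0)
    (by fun_prop (disch := exact hsinh)) (by fun_prop (disch := exact hsinh)) continuousOn_const
    (fun p _ s => by simp only [mehlerFactorX, Pi.zero_apply]; ring)
  refine hasDerivAt_integral_ofReal_mul hy₀ (closedBall_mem_nhds x one_pos) (by positivity)
    (fun x => continuous_mehlerKernel a x t) ?_ (integrable_mehlerKernel_mul ha ht hy₀ x)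
    (fun x' hx' s => hC (x', t) ⟨hx', rfl⟩ s) (fun x' _ s => hasDerivAt_mehlerKernel_x a x' s t)
  unfold mehlerFactorX
  fun_prop

lemma hasDerivAt_integral_mehlerFactorX_mul_x (ha : 0 < a) (ht : 0 < t)
    (hy₀ : MemLp y₀ 2 volume) (x : ℝ) :
    Integrable (fun s => ((mehlerFactorXX a x s t * mehlerKernel a x s t : ℝ) : ℂ) * y₀ s)
        volume ∧
      HasDerivAt (fun x => ∫ s, ((mehlerFactorX a x s t * mehlerKernel a x s t : ℝ) : ℂ) * y₀ s)
        (∫ s, ((mehlerFactorXX a x s t * mehlerKernel a x s t : ℝ) : ℂ) * y₀ s) x := by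
  have hS_pos : ∀ p ∈ closedBall x 1 ×ˢ {t}, 0 < p.2 := by rintro p ⟨-, rfl⟩; exact ht
  have hsinh : ∀ p ∈ closedBall x 1 ×ˢ {t}, sinh (2 * a * p.2) ≠ 0 := fun p hp =>
    (sinh_pos_iff.2 (mul_pos (by positivity) (hS_pos p hp))).ne'
  obtain ⟨C, hC⟩ := exists_bound_quadratic_mul_mehlerKernel ha (S := closedBall x 1 ×ˢ {t})
    ((isCompact_closedBall x 1).prod isCompact_singleton) hS_pos
    (P := fun p s => mehlerFactorXX a p.1 s p.2)
    (c₀ := fun p => -a * cosh (2 * a * p.2) / sinh (2 * a * p.2) +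
      (a * p.1 * cosh (2 * a * p.2) / sinh (2 * a * p.2)) ^ 2)
    (c₁ := fun p => -2 * p.1 * cosh (2 * a * p.2) * (a / sinh (2 * a * p.2)) ^ 2)
    (c₂ := fun p => (a / sinh (2 * a * p.2)) ^ 2)
    (by fun_prop (disch := exact hsinh)) (by fun_prop (disch := exact hsinh))
    (by fun_prop (disch := exact hsinh))
    (fun p _ s => by simp only [mehlerFactorXX, mehlerFactorX]; ring)
  refine hasDerivAt_integral_ofReal_mul hy₀ (closedBall_mem_nhds x one_pos) (by positivity)
    (fun x => by unfold mehlerFactorX; fun_prop)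
    (by unfold mehlerFactorXX mehlerFactorX; fun_prop)
    (hasDerivAt_integral_mehlerKernel_x ha ht hy₀ x).1
    (fun x' hx' s => hC (x', t) ⟨hx', rfl⟩ s)
    (fun x' _ s => hasDerivAt_mehlerFactorX_mul_mehlerKernel_x a x' s t)

lemma hasDerivAt_integral_mehlerKernel_t (ha : 0 < a) (ht : 0 < t) (hy₀ : MemLp y₀ 2 volume)
    (x : ℝ) :
    HasDerivAt (fun t => ∫ s, (mehlerKernel a x s t : ℂ) * y₀ s)
      (∫ s, ((mehlerFactorT a x s t * mehlerKernel a x s t : ℝ) : ℂ) * y₀ s) t := by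
  have hpos : ∀ t' ∈ closedBall t (t / 2), 0 < t' := by
    intro t' ht'
    rw [mem_closedBall, Real.dist_eq] at ht'
    linarith [neg_abs_le (t' - t)]
  have hsinh : ∀ p ∈ ({x} : Set ℝ) ×ˢ closedBall t (t / 2), sinh (2 * a * p.2) ≠ 0 :=
    fun p hp => (sinh_pos_iff.2 (mul_pos (by positivity) (hpos p.2 hp.2))).ne'
  obtain ⟨C, hC⟩ := exists_bound_quadratic_mul_mehlerKernel ha
    (S := ({x} : Set ℝ) ×ˢ closedBall t (t / 2))
    (isCompact_singleton.prod (isCompact_closedBall t _)) (fun p hp => hpos p.2 hp.2)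
    (P := fun p s => mehlerFactorT a p.1 s p.2)
    (c₀ := fun p => -a * cosh (2 * a * p.2) / sinh (2 * a * p.2) +
      (a * p.1 / sinh (2 * a * p.2)) ^ 2)
    (c₁ := fun p => -2 * p.1 * cosh (2 * a * p.2) * (a / sinh (2 * a * p.2)) ^ 2)
    (c₂ := fun p => (a / sinh (2 * a * p.2)) ^ 2)
    (by fun_prop (disch := exact hsinh)) (by fun_prop (disch := exact hsinh))
    (by fun_prop (disch := exact hsinh))
    (fun p _ s => by simp only [mehlerFactorT]; ring)
  exact (hasDerivAt_integral_ofReal_mul hy₀ (closedBall_mem_nhds t (half_pos ht)) (by positivity)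
    (F := fun t s => mehlerKernel a x s t) (fun t => continuous_mehlerKernel a x t)
    (by unfold mehlerFactorT; fun_prop) (integrable_mehlerKernel_mul ha ht hy₀ x)
    (fun t' ht' s => hC (x, t') ⟨rfl, ht'⟩ s)
    (fun t' ht' s => hasDerivAt_mehlerKernel_t a x s t'
      (sinh_pos_iff.2 (mul_pos (by positivity) (hpos t' ht'))))).2

end Integrals

/-- For `y₀ ∈ L²(ℝ,ℂ)`, the function `y(t,x) = ∫ K_a(x,s,t) y₀(s) ds` is well defined
(the integral converges) and solves the heat equation for the real harmonic
oscillator `∂y/∂t = ∂²y/∂x² − a²x²y` for `t > 0`. -/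
theorem harmonic_oscillator_heat_solution (a : ℝ) (ha : 0 < a) (y₀ : ℝ → ℂ)
    (hy₀ : MeasureTheory.MemLp y₀ 2 (volume : Measure ℝ))
    (y : ℝ → ℝ → ℂ)
    (hy : ∀ t x, y t x = ∫ s : ℝ, (mehlerKernel a x s t : ℂ) * y₀ s) :
    (∀ (t : ℝ), 0 < t → ∀ (x : ℝ),
        MeasureTheory.Integrable (fun s : ℝ => (mehlerKernel a x s t : ℂ) * y₀ s)
          (volume : Measure ℝ)) ∧
    (∀ (t : ℝ), 0 < t → ∀ (x : ℝ),
        deriv (fun t' : ℝ => y t' x) t =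
          iteratedDeriv 2 (fun x' : ℝ => y t x') x
            - (a : ℂ) ^ 2 * (x : ℂ) ^ 2 * y t x) := by
  refine ⟨fun t ht x => integrable_mehlerKernel_mul ha ht hy₀ x, fun t ht x => ?_⟩
  obtain rfl : y = fun t x => ∫ s, (mehlerKernel a x s t : ℂ) * y₀ s :=
    funext fun t => funext (hy t)
  have hdx : deriv (fun x => ∫ s, (mehlerKernel a x s t : ℂ) * y₀ s) =
      fun x => ∫ s, ((mehlerFactorX a x s t * mehlerKernel a x s t : ℝ) : ℂ) * y₀ s :=
    funext fun x => (hasDerivAt_integral_mehlerKernel_x ha ht hy₀ x).2.deriv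
  obtain ⟨hint, hdxx⟩ := hasDerivAt_integral_mehlerFactorX_mul_x ha ht hy₀ x
  rw [(hasDerivAt_integral_mehlerKernel_t ha ht hy₀ x).deriv, iteratedDeriv_succ,
    iteratedDeriv_one, hdx, hdxx.deriv, ← integral_const_mul,
    ← integral_sub hint ((integrable_mehlerKernel_mul ha ht hy₀ x).const_mul _)]
  congr 1 with s
  rw [mehlerFactorT_eq a x s t (sinh_pos_iff.2 (by positivity)).ne']
  push_cast
  ring
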